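/- Let G = G₁ × G₂, where G₁ and G₂ are finitely generated groups, each with finitely many conjugacy classes, with generating sets S and T respectively, and equip G with the generating set S ⊔ T. If both G₁ and G₂ have an independent signature sequence whose independent signature matrix is lower triangular (with respect to some ordering of their conjugacy classes), then G has an independent signature sequence whose independent signature matrix is lower triangular with respect to some ordering of its conjugacy classes. -/

import Mathlib

/-- Words over the alphabet `ι` with prescribed signature `α`: the word `w` has signature `α`
if each letter `i` occurs exactly `α i` times in `w`. -/
def sigSet {ι : Type*} [DecidableEq ι] (α : ι → ℕ) : Set (List ι) :=
  {w | ∀ i, w.count i = α i}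

/-- The signature vector `V_α` of a signature `α`, with respect to a family of group elements
`s : ι → G` and an enumeration `C : Fin r → ConjClasses G` of (some) conjugacy classes: its
`j`-th entry is the number of words of signature `α` whose product lies in the class `C j`. -/
noncomputable def sigVec {ι G : Type*} [DecidableEq ι] [Group G] (s : ι → G) {r : ℕ}
    (C : Fin r → ConjClasses G) (α : ι → ℕ) : Fin r → ℚ :=
  fun j => ((sigSet α ∩ {w | (w.map s).prod ∈ (C j).carrier}).ncard : ℚ)

/-- The group `G`, with generating family `s : ι → G`, has an *independent signature sequence*:
there are an enumeration `C₁, …, C_r` of all conjugacy classes of `G` and signatures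
`α₁, …, α_r` whose signature vectors `V_{α₁}, …, V_{α_r}` are linearly independent. -/
def HasISS {ι G : Type*} [DecidableEq ι] [Group G] (s : ι → G) : Prop :=
  ∃ (r : ℕ) (C : Fin r → ConjClasses G) (α : Fin r → ι → ℕ),
    Function.Bijective C ∧ LinearIndependent ℚ (fun i => sigVec s C (α i))

/-- The group `G`, with generating family `s : ι → G`, has an independent signature sequence
whose independent signature matrix is lower triangular with respect to some ordering of the
conjugacy classes of `G`. -/
def HasISSLT {ι G : Type*} [DecidableEq ι] [Group G] (s : ι → G) : Prop :=
  ∃ (r : ℕ) (C : Fin r → ConjClasses G) (α : Fin r → ι → ℕ),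
    Function.Bijective C ∧ LinearIndependent ℚ (fun i => sigVec s C (α i)) ∧
    ∀ i j : Fin r, i < j → sigVec s C (α i) j = 0

/-! Only the zero pattern of a signature matrix matters: a lower triangular matrix has
independent rows iff its diagonal entries are nonzero. A word over `ι ⊕ κ` splits into its
`ι`-letters and its `κ`-letters, and its product in `G₁ × G₂` is the pair of the products of
the two parts; so some word of signature `(α, β)` has product in the class `c × d` iff some word
of signature `α` lands in `c` and some word of signature `β` lands in `d`. Ordering the pairs
`(cᵢ × dⱼ, (αᵢ, βⱼ))` lexicographically, the signature matrix of the product has the zero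
pattern of the Kronecker product of the two given ones: lower triangular with nonzero diagonal. -/

theorem Matrix.IsLowerTriangular.linearIndependent_row_iff {n K : Type*} [Fintype n]
    [DecidableEq n] [LinearOrder n] [Field K] {M : Matrix n n K} (hM : M.IsLowerTriangular) :
    LinearIndependent K M.row ↔ ∀ i, M i i ≠ 0 := by
  rw [Matrix.linearIndependent_rows_iff_isUnit, Matrix.isUnit_iff_isUnit_det, isUnit_iff_ne_zero,
    Matrix.det_of_isLowerTriangular M hM, Finset.prod_ne_zero_iff]
  simp only [Finset.mem_univ, true_implies]

theorem Prod.isConj_iff {G₁ G₂ : Type*} [Group G₁] [Group G₂] {a c : G₁} {b d : G₂} :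
    IsConj (a, b) (c, d) ↔ IsConj a c ∧ IsConj b d := by
  simp only [_root_.isConj_iff, Prod.exists, Prod.ext_iff, Prod.mk_mul_mk, Prod.inv_mk]
  exact ⟨fun ⟨g, h, hg, hh⟩ => ⟨⟨g, hg⟩, ⟨h, hh⟩⟩, fun ⟨⟨g, hg⟩, ⟨h, hh⟩⟩ => ⟨g, h, hg, hh⟩⟩

namespace ConjClasses

variable {G₁ G₂ : Type*} [Group G₁] [Group G₂]

def prodEquiv : ConjClasses G₁ × ConjClasses G₂ ≃ ConjClasses (G₁ × G₂) where
  toFun p := Quotient.liftOn₂ p.1 p.2 (fun a b => ConjClasses.mk (a, b)) fun _ _ _ _ hac hbd =>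
    mk_eq_mk_iff_isConj.2 (Prod.isConj_iff.2 ⟨hac, hbd⟩)
  invFun c := (c.map (MonoidHom.fst G₁ G₂), c.map (MonoidHom.snd G₁ G₂))
  left_inv := by
    rintro ⟨c, d⟩
    obtain ⟨a, rfl⟩ := mk_surjective c
    obtain ⟨b, rfl⟩ := mk_surjective d
    rfl
  right_inv c := by
    obtain ⟨⟨a, b⟩, rfl⟩ := mk_surjective c
    rfl

theorem prodEquiv_mk (a : G₁) (b : G₂) :
    prodEquiv (ConjClasses.mk a, ConjClasses.mk b) = ConjClasses.mk (a, b) := rfl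

theorem carrier_prodEquiv (c : ConjClasses G₁) (d : ConjClasses G₂) :
    (prodEquiv (c, d)).carrier = c.carrier ×ˢ d.carrier := by
  obtain ⟨a, rfl⟩ := mk_surjective c
  obtain ⟨b, rfl⟩ := mk_surjective d
  ext ⟨x, y⟩
  simp only [prodEquiv_mk, mem_carrier_iff_mk_eq, Set.mem_prod, mk_eq_mk_iff_isConj,
    Prod.isConj_iff]

end ConjClasses

namespace List

variable {ι κ M₁ M₂ : Type*}

theorem count_filterMap_getLeft? [DecidableEq ι] [DecidableEq (ι ⊕ κ)] (w : List (ι ⊕ κ))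
    (i : ι) : (w.filterMap Sum.getLeft?).count i = w.count (.inl i) := by
  induction w with
  | nil => rfl
  | cons a w ih => cases a <;> simp [count_cons, filterMap_cons, ih, beq_iff_eq]

theorem count_filterMap_getRight? [DecidableEq κ] [DecidableEq (ι ⊕ κ)] (w : List (ι ⊕ κ))
    (k : κ) : (w.filterMap Sum.getRight?).count k = w.count (.inr k) := by
  induction w with
  | nil => rfl
  | cons a w ih => cases a <;> simp [count_cons, filterMap_cons, ih, beq_iff_eq]

theorem filterMap_getLeft?_append_map (u : List ι) (v : List κ) :
    (u.map Sum.inl ++ v.map Sum.inr).filterMap Sum.getLeft? = u := by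
  simp [Function.comp_def]

theorem filterMap_getRight?_append_map (u : List ι) (v : List κ) :
    (u.map Sum.inl ++ v.map Sum.inr).filterMap Sum.getRight? = v := by
  simp [Function.comp_def]

theorem prod_map_sumElim_inl_inr [Monoid M₁] [Monoid M₂] (s : ι → M₁) (t : κ → M₂)
    (w : List (ι ⊕ κ)) :
    (w.map (Sum.elim (fun i => ((s i, 1) : M₁ × M₂)) (fun k => (1, t k)))).prod =
      (((w.filterMap Sum.getLeft?).map s).prod, ((w.filterMap Sum.getRight?).map t).prod) := by
  induction w with
  | nil => rfl
  | cons a w ih => cases a <;> simp [ih, filterMap_cons]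

end List

section Signatures

variable {ι κ : Type*} [DecidableEq ι] [DecidableEq κ]

theorem sigSet_finite [Fintype ι] (α : ι → ℕ) : (sigSet α).Finite := by
  refine (List.finite_length_eq ι (∑ i, α i)).subset fun w hw => ?_
  have hlen : w.length = ∑ i, w.count i := by
    simpa using (Multiset.sum_count_eq_card (s := Finset.univ) (m := (w : Multiset ι))
      fun a _ => Finset.mem_univ a).symm
  simp only [Set.mem_ofPred_eq, hlen, show ∀ i, w.count i = α i from hw]

theorem mem_sigSet_sumElim_iff {α : ι → ℕ} {β : κ → ℕ} {w : List (ι ⊕ κ)} :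
    w ∈ sigSet (Sum.elim α β) ↔
      w.filterMap Sum.getLeft? ∈ sigSet α ∧ w.filterMap Sum.getRight? ∈ sigSet β := by
  simp only [sigSet, Set.mem_ofPred_eq, Sum.forall, Sum.elim_inl, Sum.elim_inr,
    List.count_filterMap_getLeft?, List.count_filterMap_getRight?]

theorem exists_mem_sigSet_sumElim_iff {M₁ M₂ : Type*} [Monoid M₁] [Monoid M₂] (s : ι → M₁)
    (t : κ → M₂) (α : ι → ℕ) (β : κ → ℕ) (S : Set M₁) (T : Set M₂) :
    (∃ w ∈ sigSet (Sum.elim α β),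
        (w.map (Sum.elim (fun i => ((s i, 1) : M₁ × M₂)) (fun k => (1, t k)))).prod ∈ S ×ˢ T) ↔
      (∃ u ∈ sigSet α, (u.map s).prod ∈ S) ∧ (∃ v ∈ sigSet β, (v.map t).prod ∈ T) := by
  simp only [List.prod_map_sumElim_inl_inr, Set.mem_prod]
  constructor
  · rintro ⟨w, hw, hS, hT⟩
    obtain ⟨hu, hv⟩ := mem_sigSet_sumElim_iff.1 hw
    exact ⟨⟨_, hu, hS⟩, ⟨_, hv, hT⟩⟩
  · rintro ⟨⟨u, hu, hS⟩, ⟨v, hv, hT⟩⟩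
    refine ⟨u.map Sum.inl ++ v.map Sum.inr, mem_sigSet_sumElim_iff.2 ?_, ?_⟩ <;>
      simp only [List.filterMap_getLeft?_append_map, List.filterMap_getRight?_append_map]
    exacts [⟨hu, hv⟩, ⟨hS, hT⟩]

end Signatures

/-- `sigVec s C α j = sigCount s α (C j)` holds by `rfl`. -/
noncomputable def sigCount {ι G : Type*} [DecidableEq ι] [Group G] (s : ι → G) (α : ι → ℕ)
    (c : ConjClasses G) : ℕ :=
  (sigSet α ∩ {w | (w.map s).prod ∈ c.carrier}).ncard

section SignatureCounts

variable {ι G : Type*} [DecidableEq ι] [Group G] (s : ι → G)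

theorem sigCount_ne_zero_iff [Fintype ι] (α : ι → ℕ) (c : ConjClasses G) :
    sigCount s α c ≠ 0 ↔ ∃ w ∈ sigSet α, (w.map s).prod ∈ c.carrier := by
  rw [sigCount, ← Nat.pos_iff_ne_zero, Set.ncard_pos ((sigSet_finite α).inter_of_left _)]
  rfl

theorem sigCount_sumElim_ne_zero_iff [Fintype ι] {κ H : Type*} [Fintype κ] [DecidableEq κ]
    [Group H] (t : κ → H) (α : ι → ℕ) (β : κ → ℕ) (c : ConjClasses G) (d : ConjClasses H) :
    sigCount (Sum.elim (fun i => ((s i, 1) : G × H)) (fun k => (1, t k))) (Sum.elim α β)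
        (ConjClasses.prodEquiv (c, d)) ≠ 0 ↔
      sigCount s α c ≠ 0 ∧ sigCount t β d ≠ 0 := by
  simp only [sigCount_ne_zero_iff, ConjClasses.carrier_prodEquiv]
  exact exists_mem_sigSet_sumElim_iff s t α β _ _

theorem hasISSLT_iff :
    HasISSLT s ↔ ∃ (r : ℕ) (C : Fin r → ConjClasses G) (α : Fin r → ι → ℕ),
      Function.Bijective C ∧ (∀ i j, i < j → sigCount s (α i) (C j) = 0) ∧
        ∀ i, sigCount s (α i) (C i) ≠ 0 := by
  refine exists₃_congr fun r C α => and_congr_right fun _ => ?_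
  let M : Matrix (Fin r) (Fin r) ℚ := Matrix.of fun i j => (sigCount s (α i) (C j) : ℚ)
  have hM : M.IsLowerTriangular ↔ ∀ i j, i < j → sigCount s (α i) (C j) = 0 :=
    forall₂_congr fun i j => imp_congr_right fun _ => Nat.cast_eq_zero
  have hdiag : (∀ i, M i i ≠ 0) ↔ ∀ i, sigCount s (α i) (C i) ≠ 0 :=
    forall_congr' fun i => Nat.cast_ne_zero
  constructor
  · rintro ⟨hli, hlt⟩
    have hL : M.IsLowerTriangular := fun i j hij => hlt i j hij
    exact ⟨hM.1 hL, hdiag.1 (hL.linearIndependent_row_iff.1 hli)⟩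
  · rintro ⟨hlt, hd⟩
    have hL : M.IsLowerTriangular := hM.2 hlt
    exact ⟨hL.linearIndependent_row_iff.2 (hdiag.2 hd), fun i j hij => hL hij⟩

theorem HasISSLT.of_lowerTriangular {n : Type*} [Fintype n] [LinearOrder n]
    (C : n → ConjClasses G) (α : n → ι → ℕ) (hC : Function.Bijective C)
    (hlt : ∀ i j, i < j → sigCount s (α i) (C j) = 0) (hdiag : ∀ i, sigCount s (α i) (C i) ≠ 0) :
    HasISSLT s := by
  let e := Fintype.orderIsoFinOfCardEq n rfl
  exact (hasISSLT_iff s).2 ⟨_, C ∘ e, α ∘ e, hC.comp e.bijective,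
    fun i j hij => hlt _ _ (e.lt_iff_lt.2 hij), fun i => hdiag _⟩

end SignatureCounts

theorem hasISSLT_prod_general {ι κ G₁ G₂ : Type} [Fintype ι] [Fintype κ] [DecidableEq ι] [DecidableEq κ]
    [Group G₁] [Group G₂] (s : ι → G₁) (t : κ → G₂)
    (h₁ : HasISSLT s) (h₂ : HasISSLT t) :
    HasISSLT (Sum.elim (fun i => ((s i, 1) : G₁ × G₂)) (fun k => ((1, t k) : G₁ × G₂))) := by
  obtain ⟨r₁, C₁, α₁, hC₁, hlt₁, hdiag₁⟩ := (hasISSLT_iff s).1 h₁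
  obtain ⟨r₂, C₂, α₂, hC₂, hlt₂, hdiag₂⟩ := (hasISSLT_iff t).1 h₂
  refine HasISSLT.of_lowerTriangular (n := Fin r₁ ×ₗ Fin r₂) _
    (fun p => ConjClasses.prodEquiv (C₁ (ofLex p).1, C₂ (ofLex p).2))
    (fun p => Sum.elim (α₁ (ofLex p).1) (α₂ (ofLex p).2))
    (ConjClasses.prodEquiv.bijective.comp ((hC₁.prodMap hC₂).comp ofLex.bijective))
    (fun p q hpq => ?_) (fun p => (sigCount_sumElim_ne_zero_iff s t _ _ _ _).2 ⟨hdiag₁ _, hdiag₂ _⟩)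
  rw [← not_ne_iff, sigCount_sumElim_ne_zero_iff, not_and_or, not_ne_iff, not_ne_iff]
  rcases Prod.Lex.lt_iff.1 hpq with h | ⟨-, h⟩
  · exact .inl (hlt₁ _ _ h)
  · exact .inr (hlt₂ _ _ h)

/-- Let `G = G₁ × G₂` with `G₁, G₂` finitely generated groups having finitely many conjugacy
classes, with generating families `s : ι → G₁` and `t : κ → G₂`, and equip `G` with the
generating family indexed by `ι ⊕ κ`.  If both `G₁` and `G₂` have an independent signature
sequence with lower triangular independent signature matrix (with respect to some ordering of
their conjugacy classes), then so does `G`. -/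
theorem hasISSLT_prod {ι κ G₁ G₂ : Type} [Fintype ι] [Fintype κ] [DecidableEq ι] [DecidableEq κ]
    [Group G₁] [Group G₂] (s : ι → G₁) (t : κ → G₂)
    (hs : Subgroup.closure (Set.range s) = ⊤) (ht : Subgroup.closure (Set.range t) = ⊤)
    [Finite (ConjClasses G₁)] [Finite (ConjClasses G₂)]
    (h₁ : HasISSLT s) (h₂ : HasISSLT t) :
    HasISSLT (Sum.elim (fun i => ((s i, 1) : G₁ × G₂)) (fun k => ((1, t k) : G₁ × G₂))) :=
  hasISSLT_prod_general s t h₁ h₂
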